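/- arXiv:0804.4362 — 2 statements merged into one kernel-verified Lean document; each statement's English description precedes it below -/
import Mathlib

section
/- Let h : [0,∞) → ℝ be measurable, integrable on [0,1], and 1-periodic. Then lim_{α→0⁺} 2α ∫_0^∞ e^{-2αt} h(t) dt = ∫_0^1 h(t) dt. -/
/-!
Splitting `(0, ∞)` into the unit intervals `(k, k + 1]` and using periodicity, the Laplace
transform of `h` at `β > 0` is a geometric series:
`∫₀^∞ e^{-βt} h t dt = (1 - e^{-β})⁻¹ ∫₀¹ e^{-βt} h t dt`.
As `β → 0⁺` the factor `β / (1 - e^{-β})` tends to `1` (the derivative of `1 - e^{-β}` at `0`),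
and `∫₀¹ e^{-βt} h t dt → ∫₀¹ h` by dominated convergence.
-/

open Filter Real MeasureTheory Set Topology

section PeriodicOnNonneg

variable {h : ℝ → ℝ}

lemma apply_add_natCast_of_periodic_nonneg (hper : ∀ t : ℝ, 0 ≤ t → h (t + 1) = h t)
    (k : ℕ) {t : ℝ} (ht : 0 ≤ t) : h (t + k) = h t := by
  induction k with
  | zero => simp
  | succ k ih =>
    rw [Nat.cast_succ, ← add_assoc, hper _ (by positivity), ih]

lemma intervalIntegrable_of_periodic_nonneg (hint : IntegrableOn h (Icc 0 1))
    (hper : ∀ t : ℝ, 0 ≤ t → h (t + 1) = h t) (k : ℕ) :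
    IntervalIntegrable h volume k (k + 1) := by
  have h01 : IntervalIntegrable h volume 0 1 :=
    (intervalIntegrable_iff_integrableOn_Icc_of_le zero_le_one).2 hint
  have hshift : IntervalIntegrable (fun x => h (x - k)) volume (0 + k) (1 + k) :=
    h01.comp_sub_right k
  rw [zero_add, add_comm] at hshift
  refine hshift.congr fun x hx => ?_
  rw [uIoc_of_le (by linarith)] at hx
  simpa using (apply_add_natCast_of_periodic_nonneg hper k (t := x - k) (by linarith [hx.1])).symm

lemma intervalIntegrable_exp_mul_of_periodic_nonneg (hint : IntegrableOn h (Icc 0 1))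
    (hper : ∀ t : ℝ, 0 ≤ t → h (t + 1) = h t) (β : ℝ) (k : ℕ) :
    IntervalIntegrable (fun t => exp (-β * t) * h t) volume k (k + 1) :=
  (intervalIntegrable_of_periodic_nonneg hint hper k).continuousOn_mul
    (continuous_exp.comp (continuous_const_mul (-β))).continuousOn

lemma intervalIntegral_exp_mul_natCast_add_one (hper : ∀ t : ℝ, 0 ≤ t → h (t + 1) = h t)
    (β : ℝ) (k : ℕ) :
    ∫ t in (k : ℝ)..k + 1, exp (-β * t) * h t
      = exp (-β) ^ k * ∫ t in (0 : ℝ)..1, exp (-β * t) * h t := by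
  have hshift := intervalIntegral.integral_comp_add_right
    (fun t => exp (-β * t) * h t) (a := 0) (b := 1) (k : ℝ)
  rw [zero_add, add_comm 1] at hshift
  rw [← hshift, ← intervalIntegral.integral_const_mul]
  refine intervalIntegral.integral_congr fun t ht => ?_
  rw [uIcc_of_le zero_le_one] at ht
  simp only [apply_add_natCast_of_periodic_nonneg hper k ht.1, ← exp_nat_mul]
  rw [← mul_assoc, ← exp_add]
  ring_nf

lemma intervalIntegral_exp_mul_zero_natCast (hint : IntegrableOn h (Icc 0 1))
    (hper : ∀ t : ℝ, 0 ≤ t → h (t + 1) = h t) (β : ℝ) (n : ℕ) :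
    ∫ t in (0 : ℝ)..n, exp (-β * t) * h t
      = (∑ k ∈ Finset.range n, exp (-β) ^ k) * ∫ t in (0 : ℝ)..1, exp (-β * t) * h t := by
  have hadj := intervalIntegral.sum_integral_adjacent_intervals (μ := volume)
    (a := fun k : ℕ => (k : ℝ)) (f := fun t => exp (-β * t) * h t) (n := n) fun k _ => by
      simpa using intervalIntegrable_exp_mul_of_periodic_nonneg hint hper β k
  rw [Nat.cast_zero] at hadj
  rw [← hadj, Finset.sum_mul]
  refine Finset.sum_congr rfl fun k _ => ?_
  simpa using intervalIntegral_exp_mul_natCast_add_one hper β k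

lemma integrableOn_Ioi_exp_mul_of_periodic_nonneg (hint : IntegrableOn h (Icc 0 1))
    (hper : ∀ t : ℝ, 0 ≤ t → h (t + 1) = h t) {β : ℝ} (hβ : 0 < β) :
    IntegrableOn (fun t => exp (-β * t) * h t) (Ioi 0) := by
  have hr₀ : 0 ≤ exp (-β) := (exp_pos _).le
  have hr₁ : exp (-β) < 1 := exp_lt_one_iff.2 (neg_neg_of_pos hβ)
  have hIoc (n : ℕ) : IntegrableOn (fun t => exp (-β * t) * h t) (Ioc 0 n) := by
    have := IntervalIntegrable.trans_iterate (a := fun k : ℕ => (k : ℝ)) (n := n) fun k _ => by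
      simpa using intervalIntegrable_exp_mul_of_periodic_nonneg hint hper β k
    simpa [intervalIntegrable_iff_integrableOn_Ioc_of_le] using this
  have hnorm : (fun t => ‖exp (-β * t) * h t‖) = fun t => exp (-β * t) * |h t| := by
    ext t
    rw [norm_mul, norm_of_nonneg (exp_pos _).le, norm_eq_abs]
  have habs := intervalIntegral_exp_mul_zero_natCast hint.abs
    (fun t ht => by rw [hper t ht]) β
  refine integrableOn_Ioi_of_intervalIntegral_norm_bounded
    ((1 - exp (-β))⁻¹ * ∫ t in (0 : ℝ)..1, exp (-β * t) * |h t|) 0 hIoc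
    tendsto_natCast_atTop_atTop (Eventually.of_forall fun n => ?_)
  rw [hnorm, habs, ← tsum_geometric_of_lt_one hr₀ hr₁]
  gcongr
  · exact intervalIntegral.integral_nonneg zero_le_one fun t _ => by positivity
  · exact (summable_geometric_of_lt_one hr₀ hr₁).sum_le_tsum _ fun k _ => pow_nonneg hr₀ k

lemma integral_Ioi_exp_mul_of_periodic_nonneg (hint : IntegrableOn h (Icc 0 1))
    (hper : ∀ t : ℝ, 0 ≤ t → h (t + 1) = h t) {β : ℝ} (hβ : 0 < β) :
    ∫ t in Ioi 0, exp (-β * t) * h t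
      = (1 - exp (-β))⁻¹ * ∫ t in (0 : ℝ)..1, exp (-β * t) * h t := by
  have hgeom := (hasSum_geometric_of_lt_one (exp_pos (-β)).le
    (exp_lt_one_iff.2 (neg_neg_of_pos hβ))).tendsto_sum_nat
  refine tendsto_nhds_unique
    (intervalIntegral_tendsto_integral_Ioi 0
      (integrableOn_Ioi_exp_mul_of_periodic_nonneg hint hper hβ) tendsto_natCast_atTop_atTop)
    ((hgeom.mul_const _).congr fun n => ?_)
  exact (intervalIntegral_exp_mul_zero_natCast hint hper β n).symm

end PeriodicOnNonneg

lemma tendsto_intervalIntegral_exp_mul_nhdsGT_zero {h : ℝ → ℝ} {a b : ℝ} (ha : 0 ≤ a)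
    (hab : a ≤ b) (hint : IntegrableOn h (Icc a b)) :
    Tendsto (fun β => ∫ t in a..b, exp (-β * t) * h t) (𝓝[>] 0) (𝓝 (∫ t in Icc a b, h t)) := by
  simp only [intervalIntegral.integral_of_le hab, integral_Icc_eq_integral_Ioc]
  have hint' : IntegrableOn h (Ioc a b) := hint.mono_set Ioc_subset_Icc_self
  refine tendsto_integral_filter_of_dominated_convergence (fun t => |h t|)
    (Eventually.of_forall fun β => ?_) ?_ hint'.abs (Eventually.of_forall fun t => ?_)
  · exact ((continuous_exp.comp (continuous_const_mul (-β))).aestronglyMeasurable).mul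
      hint'.aestronglyMeasurable
  · filter_upwards [self_mem_nhdsWithin] with β (hβ : 0 < β)
    filter_upwards [ae_restrict_mem measurableSet_Ioc] with t ht
    rw [norm_mul, norm_of_nonneg (exp_pos _).le, norm_eq_abs]
    exact mul_le_of_le_one_left (abs_nonneg _)
      (exp_le_one_iff.2 (by nlinarith [ht.1]))
  · have hcont : Continuous fun β : ℝ => exp (-β * t) * h t := by fun_prop
    simpa using (hcont.tendsto 0).mono_left nhdsWithin_le_nhds

lemma tendsto_mul_inv_one_sub_exp_neg_nhdsGT_zero :
    Tendsto (fun β : ℝ => β * (1 - exp (-β))⁻¹) (𝓝[>] 0) (𝓝 1) := by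
  have hderiv : HasDerivAt (fun β : ℝ => 1 - exp (-β)) 1 0 := by
    simpa using ((hasDerivAt_neg (0 : ℝ)).exp).const_sub 1
  simpa [mul_comm] using hderiv.tendsto_slope_zero_right.inv₀ one_ne_zero

theorem tendsto_mul_integral_Ioi_exp_mul_of_periodic_nonneg {h : ℝ → ℝ}
    (hint : IntegrableOn h (Icc 0 1)) (hper : ∀ t : ℝ, 0 ≤ t → h (t + 1) = h t) :
    Tendsto (fun β => β * ∫ t in Ioi 0, exp (-β * t) * h t) (𝓝[>] 0)
      (𝓝 (∫ t in Icc (0 : ℝ) 1, h t)) := by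
  have hlim := tendsto_mul_inv_one_sub_exp_neg_nhdsGT_zero.mul
    (tendsto_intervalIntegral_exp_mul_nhdsGT_zero le_rfl zero_le_one hint)
  rw [one_mul] at hlim
  refine hlim.congr' ?_
  filter_upwards [self_mem_nhdsWithin] with β (hβ : 0 < β)
  rw [integral_Ioi_exp_mul_of_periodic_nonneg hint hper hβ, mul_assoc]

theorem stmt2_general (h : ℝ → ℝ)
    (hint : IntegrableOn h (Set.Icc 0 1))
    (hper : ∀ t : ℝ, 0 ≤ t → h (t + 1) = h t) :
    Tendsto (fun α : ℝ => 2 * α * ∫ t in Set.Ioi (0:ℝ), Real.exp (-2 * α * t) * h t)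
      (nhdsWithin 0 (Set.Ioi 0)) (nhds (∫ t in Set.Icc (0:ℝ) 1, h t)) := by
  have hdouble : Tendsto (fun α : ℝ => 2 * α) (𝓝[>] 0) (𝓝[>] 0) :=
    tendsto_iff_comap.2 (comap_mulLeft_nhdsGT_zero two_pos).ge
  refine ((tendsto_mul_integral_Ioi_exp_mul_of_periodic_nonneg hint hper).comp hdouble).congr
    fun α => ?_
  simp only [Function.comp_apply, neg_mul]

theorem stmt2 (h : ℝ → ℝ) (hm : Measurable h)
    (hint : IntegrableOn h (Set.Icc 0 1))
    (hper : ∀ t : ℝ, 0 ≤ t → h (t + 1) = h t) :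
    Tendsto (fun α : ℝ => 2 * α * ∫ t in Set.Ioi (0:ℝ), Real.exp (-2 * α * t) * h t)
      (nhdsWithin 0 (Set.Ioi 0)) (nhds (∫ t in Set.Icc (0:ℝ) 1, h t)) :=
  stmt2_general h hint hper
end

section
/- Suppose for each ρ > 0, P^ρ_t denotes the value at time t of the solution to a finite horizon problem on [0, ρ], and suppose the monotonicity P^{⌊ρ⌋}_t ≤ P^ρ_t ≤ P^{⌊ρ⌋+1}_t holds (Loewner order, a.s.) together with the shift compatibility P^{N+s}_{t+s} = P^N_t ∘ θ_s for integer N and s > 0. Then the pointwise increasing limit P̄_t = lim_{N→∞} P^N_t satisfies P̄_{t+s} = P̄_t ∘ θ_s a.s. for all t ≥ 0, s > 0. -/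
/-!
The horizon `N + s` lies between the integer horizons `⌊N + s⌋` and `⌊N + s⌋ + 1`, so the
Loewner sandwich forces `P^{N+s}_{t+s}` to converge to `P̄_{t+s}` along with the integer horizons;
squeezing works because the entries of a positive semidefinite matrix are bounded by its trace.
By shift compatibility the same sequence is `P^N_t ∘ θ_s`, whose limit is `P̄_t ∘ θ_s` because
`θ_s` preserves null sets.
-/

open Filter Topology MeasureTheory

namespace Matrix

variable {m ι : Type*} [Fintype m] {l : Filter ι}

lemma PosSemidef.two_mul_abs_apply_le {X : Matrix m m ℝ} (hX : X.PosSemidef) (i j : m) :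
    2 * |X i j| ≤ X i i + X j j := by
  classical
  have hsymm : X j i = X i j := by simpa using congrFun₂ hX.isHermitian i j
  have hplus := hX.dotProduct_mulVec_nonneg (Pi.single i 1 + Pi.single j 1)
  have hminus := hX.dotProduct_mulVec_nonneg (Pi.single i 1 - Pi.single j 1)
  simp only [star_trivial, mulVec_add, mulVec_sub, mulVec_single, MulOpposite.op_one, one_smul,
    dotProduct_add, add_dotProduct, dotProduct_sub, sub_dotProduct, single_dotProduct, col_apply,
    one_mul, hsymm] at hplus hminus
  cases abs_cases (X i j) <;> linarith

lemma PosSemidef.apply_le_trace {X : Matrix m m ℝ} (hX : X.PosSemidef) (i : m) :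
    X i i ≤ X.trace :=
  Finset.single_le_sum (f := fun j => X j j) (fun _ _ => hX.diag_nonneg) (Finset.mem_univ i)

lemma PosSemidef.abs_apply_le_trace {X : Matrix m m ℝ} (hX : X.PosSemidef) (i j : m) :
    |X i j| ≤ X.trace := by
  linarith [hX.two_mul_abs_apply_le i j, hX.apply_le_trace i, hX.apply_le_trace j]

lemma tendsto_zero_of_posSemidef_of_posSemidef_sub {X Y : ι → Matrix m m ℝ}
    (hY : Tendsto Y l (𝓝 0)) (hX : ∀ᶠ i in l, (X i).PosSemidef)
    (hXY : ∀ᶠ i in l, (Y i - X i).PosSemidef) :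
    Tendsto X l (𝓝 0) := by
  have htrace : Tendsto (fun i => (Y i).trace) l (𝓝 0) :=
    (continuous_id.matrix_trace.tendsto' 0 0 (trace_zero m ℝ)).comp hY
  refine tendsto_pi_nhds.2 fun a => tendsto_pi_nhds.2 fun b => squeeze_zero_norm' ?_ htrace
  filter_upwards [hX, hXY] with i hXi hXYi
  calc ‖X i a b‖ = |X i a b| := Real.norm_eq_abs _
    _ ≤ (X i).trace := hXi.abs_apply_le_trace a b
    _ ≤ (Y i).trace := by linarith [hXYi.trace_nonneg, trace_sub (Y i) (X i)]

lemma tendsto_of_posSemidef_sub_of_posSemidef_sub {A B C : ι → Matrix m m ℝ}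
    {L : Matrix m m ℝ} (hA : Tendsto A l (𝓝 L)) (hC : Tendsto C l (𝓝 L))
    (hAB : ∀ᶠ i in l, (B i - A i).PosSemidef) (hBC : ∀ᶠ i in l, (C i - B i).PosSemidef) :
    Tendsto B l (𝓝 L) := by
  have hgap : Tendsto (fun i => B i - A i) l (𝓝 0) := by
    refine tendsto_zero_of_posSemidef_of_posSemidef_sub (Y := fun i => C i - A i)
      (by simpa using hC.sub hA) hAB ?_
    simpa only [sub_sub_sub_cancel_right] using hBC
  simpa using hA.add hgap

lemma tendsto_comp_of_floor_sandwich {p : ℝ → Matrix m m ℝ} {L : Matrix m m ℝ}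
    {ρ : ι → ℝ} (hρ : Tendsto ρ l atTop) (hp : Tendsto (fun N : ℕ => p N) atTop (𝓝 L))
    (hsand : ∀ᶠ i in l,
      (p (ρ i) - p ⌊ρ i⌋).PosSemidef ∧ (p (⌊ρ i⌋ + 1) - p (ρ i)).PosSemidef) :
    Tendsto (fun i => p (ρ i)) l (𝓝 L) := by
  have hfloor : Tendsto (fun i => ⌊ρ i⌋₊) l atTop := tendsto_nat_floor_atTop.comp hρ
  have hcast : ∀ᶠ i in l, ((⌊ρ i⌋ : ℤ) : ℝ) = (⌊ρ i⌋₊ : ℝ) := by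
    filter_upwards [hρ.eventually_ge_atTop 0] with i hi
    rw [← Int.natCast_floor_eq_floor hi, Int.cast_natCast]
  refine tendsto_of_posSemidef_sub_of_posSemidef_sub (hp.comp hfloor)
    ((hp.comp (tendsto_add_atTop_nat 1)).comp hfloor) ?_ ?_
  · filter_upwards [hsand, hcast] with i h hi
    simpa [hi] using h.1
  · filter_upwards [hsand, hcast] with i h hi
    simpa [hi] using h.2

end Matrix

theorem stmt13_general {Ω : Type*} [MeasurableSpace Ω] (P : Measure Ω)
    (n : ℕ)
    (θ : ℝ → Ω → Ω) (hθ : ∀ s, MeasurePreserving (θ s) P P)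
    (Pr : ℝ → ℝ → Ω → Matrix (Fin n) (Fin n) ℝ)
    (Pbar : ℝ → Ω → Matrix (Fin n) (Fin n) ℝ)
    (hsand : ∀ ρ : ℝ, 0 < ρ → ∀ t : ℝ, ∀ᵐ ω ∂P,
      (Pr ρ t ω - Pr ((⌊ρ⌋ : ℤ) : ℝ) t ω).PosSemidef ∧
      (Pr (((⌊ρ⌋ : ℤ) : ℝ) + 1) t ω - Pr ρ t ω).PosSemidef)
    (hshift : ∀ (N : ℕ) (s : ℝ), 0 < s → ∀ t : ℝ, ∀ᵐ ω ∂P,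
      Pr ((N : ℝ) + s) (t + s) ω = Pr (N : ℝ) t (θ s ω))
    (hlim : ∀ t : ℝ, ∀ᵐ ω ∂P,
      Tendsto (fun N : ℕ => Pr (N : ℝ) t ω) atTop (nhds (Pbar t ω))) :
    ∀ t : ℝ, 0 ≤ t → ∀ s : ℝ, 0 < s →
      ∀ᵐ ω ∂P, Pbar (t + s) ω = Pbar t (θ s ω) := by
  intro t _ s hs
  have hsandN : ∀ᵐ ω ∂P, ∀ N : ℕ,
      (Pr (N + s) (t + s) ω - Pr ⌊(N : ℝ) + s⌋ (t + s) ω).PosSemidef ∧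
      (Pr (⌊(N : ℝ) + s⌋ + 1) (t + s) ω - Pr (N + s) (t + s) ω).PosSemidef :=
    ae_all_iff.2 fun N => hsand _ (by positivity) _
  have hshiftN : ∀ᵐ ω ∂P, ∀ N : ℕ, Pr (N + s) (t + s) ω = Pr N t (θ s ω) :=
    ae_all_iff.2 fun N => hshift N s hs t
  filter_upwards [hsandN, hshiftN, hlim (t + s), (hθ s).quasiMeasurePreserving.ae (hlim t)]
    with ω hsandω hshiftω hlimω hlimθω
  have hρ : Tendsto (fun N : ℕ => (N : ℝ) + s) atTop atTop :=
    tendsto_atTop_add_const_right _ s tendsto_natCast_atTop_atTop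
  refine tendsto_nhds_unique ?_ hlimθω
  simpa only [hshiftω] using Matrix.tendsto_comp_of_floor_sandwich
    (p := fun ρ => Pr ρ (t + s) ω) hρ hlimω (Eventually.of_forall hsandω)

theorem stmt13 {Ω : Type*} [MeasurableSpace Ω] (P : Measure Ω)
    [IsProbabilityMeasure P] (n : ℕ)
    (θ : ℝ → Ω → Ω) (hθ : ∀ s, MeasurePreserving (θ s) P P)
    (Pr : ℝ → ℝ → Ω → Matrix (Fin n) (Fin n) ℝ)
    (Pbar : ℝ → Ω → Matrix (Fin n) (Fin n) ℝ)
    (hsand : ∀ ρ : ℝ, 0 < ρ → ∀ t : ℝ, ∀ᵐ ω ∂P,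
      (Pr ρ t ω - Pr ((⌊ρ⌋ : ℤ) : ℝ) t ω).PosSemidef ∧
      (Pr (((⌊ρ⌋ : ℤ) : ℝ) + 1) t ω - Pr ρ t ω).PosSemidef)
    (hshift : ∀ (N : ℕ) (s : ℝ), 0 < s → ∀ t : ℝ, ∀ᵐ ω ∂P,
      Pr ((N : ℝ) + s) (t + s) ω = Pr (N : ℝ) t (θ s ω))
    (hlim : ∀ t : ℝ, ∀ᵐ ω ∂P,
      Tendsto (fun N : ℕ => Pr (N : ℝ) t ω) atTop (nhds (Pbar t ω))) :
    ∀ t : ℝ, 0 ≤ t → ∀ s : ℝ, 0 < s →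
      ∀ᵐ ω ∂P, Pbar (t + s) ω = Pbar t (θ s ω) :=
  stmt13_general P n θ hθ Pr Pbar hsand hshift hlim
end
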